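/- arXiv:math/0511071 — 4 statements merged into one kernel-verified Lean document; each statement's English description precedes it below -/
import Mathlib

section
/- Let P be a finite set of unit vectors in ℝⁿ, all with nonnegative last coordinate, such that any two distinct points of P have inner product at most 1/2. Let P_b = {p ∈ P : last coordinate of p > 1/2} and P_a = P \ P_b. Then the set P ∪ P_b', where P_b' is the set of reflections of points of P_b across the hyperplane xₙ = 0, is a set of unit vectors with pairwise inner products at most 1/2 and has cardinality |P_a| + 2|P_b|. Consequently, if every 60°-code on S^{n-1} has size at most k, then |P_a| + 2|P_b| ≤ k. -/
/-
If `qₙ > 1/2`, the reflection `q'` of `q` across `xₙ = 0` stays at angle `≥ 60°` from every unit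
vector `p` of the upper hemisphere: `⟪p, q'⟫ = ⟪p, q⟫ - 2 pₙ qₙ ≤ ⟪p, q⟫ ≤ 1/2` when `p ≠ q`, and
`⟪q, q'⟫ = 1 - 2 qₙ² < 1/2`. Reflection preserves inner products between reflected points, and
reflected points lie strictly below the hyperplane, so none of them is already in `P`.
-/

open scoped RealInnerProductSpace
open scoped Classical

/-- Reflection of a point of `ℝ^{n+1}` across the hyperplane where the last
coordinate vanishes. -/
def reflLast (n : ℕ) (p : EuclideanSpace ℝ (Fin (n + 1))) :
    EuclideanSpace ℝ (Fin (n + 1)) :=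
  WithLp.toLp 2 (fun i => if i = Fin.last n then -(p i) else p i)

section reflLast

variable {n : ℕ}

@[simp]
lemma reflLast_apply_last (p : EuclideanSpace ℝ (Fin (n + 1))) :
    reflLast n p (Fin.last n) = -p (Fin.last n) := by
  simp [reflLast]

lemma reflLast_involutive : Function.Involutive (reflLast n) := fun p => by
  ext i
  simp only [reflLast, PiLp.toLp_apply]
  split_ifs <;> simp

lemma inner_reflLast_reflLast (p q : EuclideanSpace ℝ (Fin (n + 1))) :
    ⟪reflLast n p, reflLast n q⟫ = ⟪p, q⟫ := by
  simp only [PiLp.inner_apply, RCLike.inner_apply, starRingEnd_apply, star_trivial, reflLast]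
  refine Finset.sum_congr rfl fun i _ => ?_
  split_ifs <;> ring

lemma norm_reflLast (p : EuclideanSpace ℝ (Fin (n + 1))) : ‖reflLast n p‖ = ‖p‖ := by
  rw [norm_eq_sqrt_real_inner, norm_eq_sqrt_real_inner p, inner_reflLast_reflLast]

lemma inner_reflLast_right (p q : EuclideanSpace ℝ (Fin (n + 1))) :
    ⟪p, reflLast n q⟫ = ⟪p, q⟫ - 2 * p (Fin.last n) * q (Fin.last n) := by
  simp only [PiLp.inner_apply, RCLike.inner_apply, starRingEnd_apply, star_trivial, reflLast]
  have hsplit : ∀ i, (if i = Fin.last n then -q i else q i) * p i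
      = q i * p i - if i = Fin.last n then 2 * p i * q i else 0 := by
    intro i
    split_ifs <;> ring
  simp_rw [hsplit, Finset.sum_sub_distrib, Finset.sum_ite_eq' Finset.univ (Fin.last n)]
  simp

lemma inner_self_reflLast_lt_half {q : EuclideanSpace ℝ (Fin (n + 1))} (hq : ‖q‖ = 1)
    (hq_cap : 1 / 2 < q (Fin.last n)) : ⟪q, reflLast n q⟫ < 1 / 2 := by
  have hqq : ⟪q, q⟫ = 1 := by rw [real_inner_self_eq_norm_sq, hq, one_pow]
  rw [inner_reflLast_right, hqq]
  nlinarith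

lemma inner_reflLast_le_half {p q : EuclideanSpace ℝ (Fin (n + 1))} (hp : ‖p‖ = 1)
    (hp_upper : 0 ≤ p (Fin.last n)) (hq_cap : 1 / 2 < q (Fin.last n))
    (hpq : p ≠ q → ⟪p, q⟫ ≤ 1 / 2) : ⟪p, reflLast n q⟫ ≤ 1 / 2 := by
  rcases eq_or_ne p q with rfl | hne
  · exact (inner_self_reflLast_lt_half hp hq_cap).le
  · have hprod : 0 ≤ p (Fin.last n) * q (Fin.last n) := mul_nonneg hp_upper (by linarith)
    rw [inner_reflLast_right]
    linarith [hpq hne]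

lemma disjoint_image_reflLast {S T : Finset (EuclideanSpace ℝ (Fin (n + 1)))}
    (hS : ∀ p ∈ S, 0 ≤ p (Fin.last n)) (hT : ∀ q ∈ T, 0 < q (Fin.last n)) :
    Disjoint S (T.image (reflLast n)) := by
  refine Finset.disjoint_right.mpr ?_
  rintro _ hp hpS
  obtain ⟨q, hq, rfl⟩ := Finset.mem_image.mp hp
  have := hS _ hpS
  rw [reflLast_apply_last] at this
  linarith [hT q hq]

lemma card_union_image_reflLast {P Pb : Finset (EuclideanSpace ℝ (Fin (n + 1)))}
    (hP : ∀ p ∈ P, 0 ≤ p (Fin.last n)) (hPbP : Pb ⊆ P) (hPb : ∀ q ∈ Pb, 0 < q (Fin.last n)) :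
    (P ∪ Pb.image (reflLast n)).card = (P \ Pb).card + 2 * Pb.card := by
  rw [Finset.card_union_of_disjoint (disjoint_image_reflLast hP hPb),
    Finset.card_image_of_injective _ reflLast_involutive.injective,
    ← Finset.card_sdiff_add_card_eq_card hPbP]
  ring

lemma inner_le_half_union_image_reflLast {P Pb : Finset (EuclideanSpace ℝ (Fin (n + 1)))}
    (hnorm : ∀ p ∈ P, ‖p‖ = 1) (hhemi : ∀ p ∈ P, 0 ≤ p (Fin.last n))
    (hcode : ∀ p ∈ P, ∀ q ∈ P, p ≠ q → ⟪p, q⟫ ≤ 1 / 2)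
    (hPbP : Pb ⊆ P) (hPb : ∀ q ∈ Pb, 1 / 2 < q (Fin.last n)) :
    ∀ p ∈ P ∪ Pb.image (reflLast n), ∀ q ∈ P ∪ Pb.image (reflLast n),
      p ≠ q → ⟪p, q⟫ ≤ 1 / 2 := by
  have hmixed : ∀ p ∈ P, ∀ q ∈ Pb, ⟪p, reflLast n q⟫ ≤ 1 / 2 := fun p hp q hq =>
    inner_reflLast_le_half (hnorm p hp) (hhemi p hp) (hPb q hq) (hcode p hp q (hPbP hq))
  simp only [Finset.mem_union, Finset.mem_image]
  rintro p (hp | ⟨p, hp, rfl⟩) q (hq | ⟨q, hq, rfl⟩) hne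
  · exact hcode p hp q hq hne
  · exact hmixed p hp q hq
  · exact real_inner_comm (reflLast n p) q ▸ hmixed q hq p hp
  · rw [inner_reflLast_reflLast]
    exact hcode p (hPbP hp) q (hPbP hq) (ne_of_apply_ne _ hne)

end reflLast

theorem doubling_argument (n : ℕ) (k : ℕ)
    (P : Finset (EuclideanSpace ℝ (Fin (n + 1))))
    (hnorm : ∀ p ∈ P, ‖p‖ = 1)
    (hhemi : ∀ p ∈ P, 0 ≤ p (Fin.last n))
    (hcode : ∀ p ∈ P, ∀ q ∈ P, p ≠ q → ⟪p, q⟫ ≤ 1 / 2)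
    (Pb : Finset (EuclideanSpace ℝ (Fin (n + 1))))
    (hPb : Pb = P.filter (fun p => 1 / 2 < p (Fin.last n)))
    (Pa : Finset (EuclideanSpace ℝ (Fin (n + 1))))
    (hPa : Pa = P \ Pb)
    (hk : ∀ Q : Finset (EuclideanSpace ℝ (Fin (n + 1))),
      (∀ p ∈ Q, ‖p‖ = 1) → (∀ p ∈ Q, ∀ q ∈ Q, p ≠ q → ⟪p, q⟫ ≤ 1 / 2) →
      Q.card ≤ k) :
    (∀ p ∈ P ∪ Pb.image (reflLast n), ‖p‖ = 1) ∧
    (∀ p ∈ P ∪ Pb.image (reflLast n), ∀ q ∈ P ∪ Pb.image (reflLast n),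
      p ≠ q → ⟪p, q⟫ ≤ 1 / 2) ∧
    (P ∪ Pb.image (reflLast n)).card = Pa.card + 2 * Pb.card ∧
    Pa.card + 2 * Pb.card ≤ k := by
  have hPbP : Pb ⊆ P := hPb ▸ Finset.filter_subset _ P
  have hPb_cap : ∀ q ∈ Pb, 1 / 2 < q (Fin.last n) := by
    subst hPb
    exact fun q hq => (Finset.mem_filter.mp hq).2
  have hunit : ∀ p ∈ P ∪ Pb.image (reflLast n), ‖p‖ = 1 := by
    simp only [Finset.mem_union, Finset.mem_image]
    rintro _ (hp | ⟨p, hp, rfl⟩)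
    exacts [hnorm _ hp, (norm_reflLast p).trans (hnorm p (hPbP hp))]
  have hsep := inner_le_half_union_image_reflLast hnorm hhemi hcode hPbP hPb_cap
  have hcard : (P ∪ Pb.image (reflLast n)).card = Pa.card + 2 * Pb.card := by
    rw [hPa]
    exact card_union_image_reflLast hhemi hPbP fun q hq => by linarith [hPb_cap q hq]
  exact ⟨hunit, hsep, hcard, hcard ▸ hk _ hunit hsep⟩
end

section
/- Fix φ with 0 < φ ≤ π/2 and 0 < u ≤ v ≤ π/2 with v < φ. Then the function ω(φ, α, β) = arccos((cos φ − cos α cos β)/(sin α sin β)), restricted to u ≤ α ≤ β ≤ v, attains its minimum at α = β = v. -/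
open Real

/-- The function `ω(φ, α, β)` describing the change of distance under meridian
projection to the equator. -/
noncomputable def omegaFn (φ α β : ℝ) : ℝ :=
  Real.arccos ((Real.cos φ - Real.cos α * Real.cos β) / (Real.sin α * Real.sin β))

lemma arccos_antitone : Antitone Real.arccos := fun x y h => by
  simp only [Real.arccos]
  exact sub_le_sub_left (Real.monotone_arcsin h) _

lemma aux_mono (p c a a' : ℝ) (hp : 0 ≤ p) (hpc : p ≤ c) (ha : 0 < a)
    (haa : a ≤ a') (ha' : a' ≤ π / 2) :
    (p - c * Real.cos a) / Real.sin a ≤ (p - c * Real.cos a') / Real.sin a' := by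
  have hsa : 0 < Real.sin a := Real.sin_pos_of_pos_of_lt_pi ha (lt_of_le_of_lt (le_trans haa ha') (by linarith [Real.pi_pos]))
  have hsa' : 0 < Real.sin a' := Real.sin_pos_of_pos_of_lt_pi (lt_of_lt_of_le ha haa) (lt_of_le_of_lt ha' (by linarith [Real.pi_pos]))
  rw [div_le_div_iff₀ hsa hsa']
  -- key : p * (sin a' - sin a) ≤ c * sin (a' - a)
  have hsd : Real.sin (a' - a) = Real.sin a' * Real.cos a - Real.cos a' * Real.sin a :=
    Real.sin_sub a' a
  have hsd0 : 0 ≤ Real.sin (a' - a) :=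
    Real.sin_nonneg_of_nonneg_of_le_pi (by linarith) (by linarith [Real.pi_pos, Real.pi_gt_three])
  have hmono : Real.sin a ≤ Real.sin a' := by
    apply Real.sin_le_sin_of_le_of_le_pi_div_two (by linarith [Real.pi_pos]) ha' haa
  have hkey : Real.sin a' - Real.sin a ≤ Real.sin (a' - a) := by
    have hexp : Real.sin a' = Real.sin (a' - a) * Real.cos a + Real.cos (a' - a) * Real.sin a := by
      have := Real.sin_add (a' - a) a
      simpa using this
    have hca : Real.cos a ≤ 1 := Real.cos_le_one a
    have hcd : Real.cos (a' - a) ≤ 1 := Real.cos_le_one (a' - a)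
    nlinarith [hsa.le]
  have h1 : p * (Real.sin a' - Real.sin a) ≤ c * Real.sin (a' - a) := by
    calc p * (Real.sin a' - Real.sin a) ≤ c * (Real.sin a' - Real.sin a) := by
          apply mul_le_mul_of_nonneg_right hpc (by linarith)
      _ ≤ c * Real.sin (a' - a) := by
          apply mul_le_mul_of_nonneg_left hkey (by linarith)
  nlinarith [h1, hsd]

theorem omega_min_at_corner (φ u v : ℝ)
    (hφ0 : 0 < φ) (hφ : φ ≤ π / 2)
    (hu : 0 < u) (huv : u ≤ v) (hv : v ≤ π / 2) (hvφ : v < φ) :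
    ∀ α β : ℝ, u ≤ α → α ≤ β → β ≤ v →
      omegaFn φ v v ≤ omegaFn φ α β := by
  intro α β hα hαβ hβv
  have hα0 : 0 < α := lt_of_lt_of_le hu hα
  have hβ0 : 0 < β := lt_of_lt_of_le hα0 hαβ
  have hv0 : 0 < v := lt_of_lt_of_le hβ0 hβv
  have hαv : α ≤ v := le_trans hαβ hβv
  have hπ := Real.pi_pos
  have hcφ : 0 ≤ Real.cos φ := Real.cos_nonneg_of_mem_Icc ⟨by linarith, hφ⟩
  have hcos_mono : ∀ x y : ℝ, 0 ≤ x → x ≤ y → y ≤ π / 2 → Real.cos y ≤ Real.cos x := by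
    intro x y hx hxy hy
    exact Real.cos_le_cos_of_nonneg_of_le_pi hx (by linarith) hxy
  have hsβ : 0 < Real.sin β := Real.sin_pos_of_pos_of_lt_pi hβ0 (by linarith)
  have hsv : 0 < Real.sin v := Real.sin_pos_of_pos_of_lt_pi hv0 (by linarith)
  -- step 1: increase α to v, with β fixed
  have step1 : (Real.cos φ - Real.cos α * Real.cos β) / (Real.sin α * Real.sin β)
      ≤ (Real.cos φ - Real.cos v * Real.cos β) / (Real.sin v * Real.sin β) := by
    have hpc : Real.cos φ ≤ Real.cos β := hcos_mono β φ hβ0.le (by linarith) hφ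
    have h := aux_mono (Real.cos φ) (Real.cos β) α v hcφ hpc hα0 hαv hv
    have e1 : (Real.cos φ - Real.cos α * Real.cos β) / (Real.sin α * Real.sin β)
        = ((Real.cos φ - Real.cos β * Real.cos α) / Real.sin α) / Real.sin β := by
      rw [div_div]; ring_nf
    have e2 : (Real.cos φ - Real.cos v * Real.cos β) / (Real.sin v * Real.sin β)
        = ((Real.cos φ - Real.cos β * Real.cos v) / Real.sin v) / Real.sin β := by
      rw [div_div]; ring_nf
    rw [e1, e2]
    gcongr
  -- step 2: increase β to v, with α = v
  have step2 : (Real.cos φ - Real.cos v * Real.cos β) / (Real.sin v * Real.sin β)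
      ≤ (Real.cos φ - Real.cos v * Real.cos v) / (Real.sin v * Real.sin v) := by
    have hpc : Real.cos φ ≤ Real.cos v := hcos_mono v φ hv0.le (by linarith) hφ
    have h := aux_mono (Real.cos φ) (Real.cos v) β v hcφ hpc hβ0 hβv hv
    have e1 : (Real.cos φ - Real.cos v * Real.cos β) / (Real.sin v * Real.sin β)
        = ((Real.cos φ - Real.cos v * Real.cos β) / Real.sin β) / Real.sin v := by
      rw [div_div]; ring_nf
    have e2 : (Real.cos φ - Real.cos v * Real.cos v) / (Real.sin v * Real.sin v)
        = ((Real.cos φ - Real.cos v * Real.cos v) / Real.sin v) / Real.sin v := by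
      rw [div_div]
    rw [e1, e2]
    gcongr
  exact arccos_antitone (step1.trans step2)
end

section
/- Let f be a real polynomial with expansion f = Σ_{k=0}^d f_k G_k^{(n)} in Gegenbauer polynomials with all f_k ≥ 0. Then for any finite set P = {p₁,…,p_M} of unit vectors in ℝⁿ, the sum Σᵢ Σⱼ f(⟨pᵢ, pⱼ⟩) ≥ f₀ M². -/
/-!
Testing the Schoenberg matrix of `G_k` against the all-ones vector gives
`∑ᵢ ∑ⱼ G_k(⟨pᵢ, pⱼ⟩) ≥ 0` for every `k`. After exchanging the sums, the left-hand side is the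
`k = 0` term `f₀ M²` (as `G₀ = 1`) of a sum of nonnegative terms.
-/

open scoped RealInnerProductSpace
/-- The Gegenbauer polynomials `G_k^{(n)}`, normalized so that `G_k^{(n)}(1) = 1`,
defined by `G₀ = 1`, `G₁ = t`, and
`G_k^{(n)} = ((2k+n−4) t G_{k−1}^{(n)} − (k−1) G_{k−2}^{(n)}) / (k+n−3)`. -/
noncomputable def gegenbauer (n : ℕ) : ℕ → ℝ → ℝ
  | 0 => fun _ => 1
  | 1 => fun t => t
  | (k + 2) => fun t =>
      ((2 * ((k : ℝ) + 2) + n - 4) * t * gegenbauer n (k + 1) t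
        - ((k : ℝ) + 1) * gegenbauer n k t) / ((k : ℝ) + 2 + n - 3)

theorem Matrix.PosSemidef.sum_sum_nonneg {n R : Type*} [Fintype n] [Ring R] [PartialOrder R]
    [StarRing R] {A : Matrix n n R} (hA : A.PosSemidef) : 0 ≤ ∑ i, ∑ j, A i j := by
  simpa [dotProduct, Matrix.mulVec, Finset.sum_mul] using hA.dotProduct_mulVec_nonneg 1

theorem delsarte_positivity_general (n d M : ℕ)
    (f : ℕ → ℝ) (hf : ∀ k, k ≤ d → 0 ≤ f k)
    (p : Fin M → EuclideanSpace ℝ (Fin n))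
    (hSchoenberg : ∀ k : ℕ,
      (Matrix.of fun i j : Fin M => gegenbauer n k ⟪p i, p j⟫).PosSemidef) :
    (f 0) * (M : ℝ) ^ 2 ≤
      ∑ i : Fin M, ∑ j : Fin M,
        ∑ k ∈ Finset.range (d + 1), f k * gegenbauer n k ⟪p i, p j⟫ := by
  set S : ℕ → ℝ := fun k => ∑ i : Fin M, ∑ j : Fin M, gegenbauer n k ⟪p i, p j⟫
  have hS : ∀ k, 0 ≤ S k := fun k => (hSchoenberg k).sum_sum_nonneg
  calc f 0 * (M : ℝ) ^ 2 = f 0 * S 0 := by simp [S, gegenbauer, sq]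
    _ ≤ ∑ k ∈ Finset.range (d + 1), f k * S k :=
      Finset.single_le_sum (f := fun k => f k * S k)
        (fun k hk => mul_nonneg (hf k (Finset.mem_range_succ_iff.mp hk)) (hS k))
        (Finset.mem_range.mpr d.succ_pos)
    _ = _ := by
      simp only [S, Finset.mul_sum]
      rw [Finset.sum_comm]
      exact Finset.sum_congr rfl fun i _ => Finset.sum_comm

theorem delsarte_positivity (n d M : ℕ)
    (f : ℕ → ℝ) (hf : ∀ k, k ≤ d → 0 ≤ f k)
    (p : Fin M → EuclideanSpace ℝ (Fin n))
    (hnorm : ∀ i, ‖p i‖ = 1)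
    (hSchoenberg : ∀ k : ℕ,
      (Matrix.of fun i j : Fin M => gegenbauer n k ⟪p i, p j⟫).PosSemidef) :
    (f 0) * (M : ℝ) ^ 2 ≤
      ∑ i : Fin M, ∑ j : Fin M,
        ∑ k ∈ Finset.range (d + 1), f k * gegenbauer n k ⟪p i, p j⟫ :=
  delsarte_positivity_general n d M f hf p hSchoenberg
end

section
/- Let g(t) = 1 + 2.7986·G₁(t) + 3.6388·G₂(t) + 3.4429·G₃(t) + 2.1227·G₄(t) + 0.8637·G₅(t) + 0.1281·G₉(t) with G_k = G_k^{(3)} normalized Gegenbauer polynomials for dimension 3. Then 15·g(1) + 40·g(1/√3) < 225. -/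
/-- The polynomial `g` used in Lemma 2, expanded in three-dimensional
Gegenbauer (Legendre) polynomials. -/
noncomputable def gPoly (t : ℝ) : ℝ :=
  1 + 2.7986 * gegenbauer 3 1 t + 3.6388 * gegenbauer 3 2 t
    + 3.4429 * gegenbauer 3 3 t + 2.1227 * gegenbauer 3 4 t
    + 0.8637 * gegenbauer 3 5 t + 0.1281 * gegenbauer 3 9 t

theorem lemma2_numerics :
    15 * gPoly 1 + 40 * gPoly (1 / Real.sqrt 3) < 225 := by
  have hs : Real.sqrt 3 ^ 2 = 3 := Real.sq_sqrt (by norm_num)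
  have hpos : (0:ℝ) < Real.sqrt 3 := Real.sqrt_pos.mpr (by norm_num)
  simp only [gPoly, gegenbauer]
  push_cast
  ring_nf
  set u : ℝ := (Real.sqrt 3)⁻¹ with hud
  have hupos : (0:ℝ) < u := by positivity
  have hu : u ^ 2 = 1/3 := by
    rw [hud, inv_pow, hs]; norm_num
  have h3 : u ^ 3 = u / 3 := by rw [pow_succ, hu]; ring
  have h4 : u ^ 4 = 1/9 := by rw [show (4:ℕ) = 2*2 from rfl, pow_mul, hu]; norm_num
  have h5 : u ^ 5 = u / 9 := by rw [pow_succ, h4]; ring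
  have h6 : u ^ 6 = 1/27 := by rw [show (6:ℕ) = 2*3 from rfl, pow_mul, hu]; norm_num
  have h7 : u ^ 7 = u / 27 := by rw [pow_succ, h6]; ring
  have h8 : u ^ 8 = 1/81 := by rw [show (8:ℕ) = 2*4 from rfl, pow_mul, hu]; norm_num
  have h9 : u ^ 9 = u / 81 := by rw [pow_succ, h8]; ring
  have hub : u < 0.578 := by nlinarith [hu, hupos]
  rw [h3, h5, h7, h9, hu]
  linarith
end
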